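/- arXiv:2506.18649 — 2 statements merged into one kernel-verified Lean document; each statement's English description precedes it below -/
import Mathlib

section
/- Let d ≥ 1, Δx > 0, c¹,…,c^d > 0, and let a_α(t) := Δx^{−d} ∏_{j=1}^d e^{−r^j} I_{α^j}(r^j) with r^j := 2c^j t/Δx². Set C₀ := 252. Then for every α ∈ ℤ^d and every t with t ≥ 2 max_{j≤d} |α^j| Δx² / (C₀ min_{j≤d} c^j), one has the Gaussian pointwise estimate |a_α(t)| ≤ π^{d/2} ∏_{j=1}^d (4 c^j t)^{−1/2} exp(−(α^j Δx)² / (2 C₀ c^j t)). -/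
open scoped BigOperators

/-- Modified Bessel function of the first kind of integer order. -/
noncomputable def besselI (n : ℤ) (r : ℝ) : ℝ :=
  ∑' k : ℕ, (1 / ((Nat.factorial k : ℝ) * (Nat.factorial (k + n.natAbs) : ℝ)))
    * (r / 2) ^ (2 * k + n.natAbs)

/-- The semi-discrete heat kernel. -/
noncomputable def heatKernel (d : ℕ) (Δx : ℝ) (c : Fin d → ℝ) (α : Fin d → ℤ) (t : ℝ) : ℝ :=
  (Δx ^ d)⁻¹ * ∏ j : Fin d,
    Real.exp (-(2 * c j * t / Δx ^ 2)) * besselI (α j) (2 * c j * t / Δx ^ 2)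

open Real


lemma factorial_stirling (m : ℕ) : Real.sqrt (2*π*(m+1)) * (((m:ℝ)+1)/Real.exp 1)^(m+1) ≤ (m+1).factorial := by
  have h1 : Real.sqrt π ≤ Stirling.stirlingSeq (m+1) := by
    have := Stirling.stirlingSeq'_antitone
    have hlim : Filter.Tendsto (Stirling.stirlingSeq ∘ Nat.succ) Filter.atTop (nhds (Real.sqrt π)) :=
      Stirling.tendsto_stirlingSeq_sqrt_pi.comp (Filter.tendsto_add_atTop_nat 1)
    exact this.le_of_tendsto hlim m
  rw [Stirling.stirlingSeq] at h1
  have hpos : (0:ℝ) < Real.sqrt (2*((m:ℕ)+1:ℕ)) * (((m:ℕ)+1:ℕ)/Real.exp 1)^(m+1) := by positivity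
  rw [le_div_iff₀ hpos] at h1
  calc Real.sqrt (2*π*(m+1)) * (((m:ℝ)+1)/Real.exp 1)^(m+1)
      = Real.sqrt π * (Real.sqrt (2*(((m:ℕ)+1:ℕ))) * ((((m:ℕ)+1:ℕ):ℝ)/Real.exp 1)^(m+1)) := by
        push_cast
        rw [show 2*π*((m:ℝ)+1) = π * (2*((m:ℝ)+1)) by ring, Real.sqrt_mul pi_pos.le]
        ring
    _ ≤ (m+1).factorial := h1

lemma exp_tsum (x : ℝ) : Real.exp x = ∑' n : ℕ, x ^ n / n.factorial := by
  rw [Real.exp_eq_exp_ℝ, NormedSpace.exp_eq_tsum_div]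

lemma pow_div_fact_le_exp (x : ℝ) (hx : 0 ≤ x) (m : ℕ) : x ^ m / m.factorial ≤ Real.exp x := by
  rw [exp_tsum]
  exact Summable.le_tsum (Real.summable_pow_div_factorial x) m (fun k _ => by positivity)

set_option maxHeartbeats 1000000 in
/-- bound on Poisson pmf -/
lemma poisson_le (μ : ℝ) (hμ : 0 < μ) (m : ℕ) :
    Real.exp (-μ) * μ ^ m / m.factorial ≤ min 1 (0.8 / Real.sqrt μ) := by
  have hfac : (0:ℝ) < m.factorial := by exact_mod_cast m.factorial_pos
  have hsμ : (0:ℝ) < Real.sqrt μ := Real.sqrt_pos.mpr hμ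
  have hp1 : Real.exp (-μ) * μ ^ m / m.factorial ≤ 1 := by
    have h := pow_div_fact_le_exp μ hμ.le m
    calc Real.exp (-μ) * μ ^ m / m.factorial = Real.exp (-μ) * (μ ^ m / m.factorial) := by ring
      _ ≤ Real.exp (-μ) * Real.exp μ := mul_le_mul_of_nonneg_left h (Real.exp_pos _).le
      _ = 1 := by rw [← Real.exp_add]; simp
  refine le_min hp1 ?_
  rcases Nat.eq_zero_or_pos m with hm0 | hm1
  · subst hm0
    simp only [pow_zero, Nat.factorial_zero, Nat.cast_one, mul_one, div_one]
    have key : Real.sqrt μ ≤ 0.8 * Real.exp μ := by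
      have h3 : (0.8 * Real.exp μ)^2 = 0.64 * Real.exp (μ+μ) := by rw [Real.exp_add]; ring
      have h4 := Real.add_one_le_exp (μ+μ)
      have h2 : μ ≤ (0.8 * Real.exp μ)^2 := by nlinarith
      calc Real.sqrt μ ≤ Real.sqrt ((0.8 * Real.exp μ)^2) := Real.sqrt_le_sqrt h2
        _ = 0.8 * Real.exp μ := Real.sqrt_sq (by positivity)
    rw [Real.exp_neg, inv_eq_one_div, div_le_div_iff₀ (Real.exp_pos _) hsμ]
    linarith
  · obtain ⟨m', rfl⟩ : ∃ m', m = m' + 1 := ⟨m - 1, (Nat.succ_pred_eq_of_pos hm1).symm⟩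
    have hnR : (1:ℝ) ≤ ((m'+1 : ℕ):ℝ) := by exact_mod_cast hm1
    set n : ℕ := m' + 1 with hn
    have hnpos : (0:ℝ) < (n:ℝ) := by linarith
    have hst : Real.sqrt (2*π*n) * ((n:ℝ)/Real.exp 1)^n ≤ n.factorial := by
      have := factorial_stirling m'
      push_cast at this ⊢
      convert this using 2 <;> simp only [hn, Nat.cast_add, Nat.cast_one]
    have hden : (0:ℝ) < Real.sqrt (2*π*n) * ((n:ℝ)/Real.exp 1)^n := by positivity
    have hlogid : Real.exp (-μ) * μ ^ n / (Real.sqrt (2*π*n) * ((n:ℝ)/Real.exp 1)^n)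
        = Real.exp ((n:ℝ) * Real.log (μ/n) + n - μ) / Real.sqrt (2*π*n) := by
      have hμn : μ ^ n = Real.exp ((n:ℝ) * Real.log μ) := by
        rw [Real.exp_nat_mul, Real.exp_log hμ]
      have hnn : ((n:ℝ)/Real.exp 1)^n = Real.exp ((n:ℝ) * (Real.log n - 1)) := by
        rw [Real.exp_nat_mul]
        congr 1
        rw [show Real.log (n:ℝ) - 1 = Real.log n - Real.log (Real.exp 1) by rw [Real.log_exp],
          ← Real.log_div (ne_of_gt hnpos) (Real.exp_ne_zero 1),
          Real.exp_log (by positivity)]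
      rw [hμn, hnn, Real.log_div (ne_of_gt hμ) (ne_of_gt hnpos)]
      rw [show Real.exp ((n:ℝ)*(Real.log μ - Real.log n) + n - μ)
          = Real.exp (-μ) * Real.exp ((n:ℝ)*Real.log μ) / Real.exp ((n:ℝ)*(Real.log n - 1)) by
        rw [← Real.exp_add, ← Real.exp_sub]; ring_nf]
      field_simp
    have hE : Real.exp (-μ) * μ ^ n / n.factorial
        ≤ Real.exp ((n:ℝ) * Real.log (μ/n) + n - μ) / Real.sqrt (2*π*n) := by
      rw [← hlogid]
      exact div_le_div_of_nonneg_left (by positivity) hden hst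
    refine hE.trans ?_
    have hElog : Real.log (μ/n) ≤ μ/n - 1 := Real.log_le_sub_one_of_pos (by positivity)
    rcases le_or_gt μ (4*n) with hcase | hcase
    · -- μ ≤ 4n : exponent ≤ 0, and 1/√(2πn) ≤ 0.8/√μ
      have hexp1 : Real.exp ((n:ℝ) * Real.log (μ/n) + n - μ) ≤ 1 := by
        rw [show (1:ℝ) = Real.exp 0 by simp]
        apply Real.exp_le_exp.mpr
        have hnn : (n:ℝ)*(μ/n) = μ := by field_simp
        nlinarith [mul_le_mul_of_nonneg_left hElog hnpos.le]
      have hsqrt : Real.sqrt μ ≤ 0.8 * Real.sqrt (2*π*n) := by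
        have hπ : (3.125:ℝ) ≤ π := by linarith [Real.pi_gt_d6]
        have : μ ≤ 0.64 * (2*π*n) := by nlinarith
        calc Real.sqrt μ ≤ Real.sqrt (0.64 * (2*π*n)) := Real.sqrt_le_sqrt this
          _ = 0.8 * Real.sqrt (2*π*n) := by
            rw [Real.sqrt_mul (by norm_num),
                show Real.sqrt 0.64 = 0.8 by
                  rw [show (0.64:ℝ) = 0.8^2 by norm_num, Real.sqrt_sq (by norm_num)]]
      have hs2 : (0:ℝ) < Real.sqrt (2*π*n) := by positivity
      rw [div_le_div_iff₀ hs2 hsμ]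
      calc Real.exp _ * Real.sqrt μ ≤ 1 * (0.8 * Real.sqrt (2*π*n)) := by
            apply mul_le_mul hexp1 hsqrt hsμ.le (by norm_num)
        _ = 0.8 * Real.sqrt (2*π*n) := by ring
    · -- μ > 4n : exponent ≤ -μ/4
      have hlog4 : Real.log (μ/n) ≤ μ/(4*n) - 1 + Real.log 4 := by
        have : Real.log (μ/n) = Real.log (μ/(4*n)) + Real.log 4 := by
          rw [← Real.log_mul (by positivity) (by norm_num)]
          congr 1; field_simp
        have h5 : Real.log (μ/(4*n)) ≤ μ/(4*n) - 1 := Real.log_le_sub_one_of_pos (by positivity)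
        linarith
      have hlog4' : Real.log 4 ≤ 2 := by
        rw [show (4:ℝ) = 2^2 by norm_num, Real.log_pow]
        push_cast
        linarith [Real.log_two_lt_d9]
      have hexpE : (n:ℝ) * Real.log (μ/n) + n - μ ≤ -μ/4 := by
        have hmul : (n:ℝ) * Real.log (μ/n) ≤ (n:ℝ) * (μ/(4*n) - 1 + Real.log 4) :=
          mul_le_mul_of_nonneg_left hlog4 hnpos.le
        have hid : (n:ℝ) * (μ/(4*n) - 1 + Real.log 4) = μ/4 - n + n * Real.log 4 := by
          field_simp
        have hl4 : (n:ℝ) * Real.log 4 ≤ 2*n := by nlinarith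
        have h8 : (2:ℝ)*n ≤ μ/2 := by linarith
        linarith
      have hs2π : Real.sqrt (2*π) ≤ Real.sqrt (2*π*n) :=
        Real.sqrt_le_sqrt (by nlinarith [Real.pi_pos])
      have key : Real.sqrt μ ≤ 0.8 * Real.sqrt (2*π) * Real.exp (μ/4) := by
        have h3 : (0.8 * Real.sqrt (2*π) * Real.exp (μ/4))^2
            = 0.64 * (2*π) * Real.exp (μ/4+μ/4) := by
          rw [Real.exp_add, mul_pow, mul_pow, Real.sq_sqrt (by positivity : (0:ℝ) ≤ 2*π)]; ring
        have h4 := Real.add_one_le_exp (μ/4+μ/4)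
        have hπ : (3.125:ℝ) ≤ π := by linarith [Real.pi_gt_d6]
        have h2 : μ ≤ (0.8 * Real.sqrt (2*π) * Real.exp (μ/4))^2 := by nlinarith
        calc Real.sqrt μ ≤ Real.sqrt ((0.8 * Real.sqrt (2*π) * Real.exp (μ/4))^2) :=
              Real.sqrt_le_sqrt h2
          _ = _ := Real.sqrt_sq (by positivity)
      have hs2 : (0:ℝ) < Real.sqrt (2*π*n) := by positivity
      rw [div_le_div_iff₀ hs2 hsμ]
      have hexpbound : Real.exp ((n:ℝ) * Real.log (μ/n) + n - μ) ≤ Real.exp (-(μ/4)) := by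
        apply Real.exp_le_exp.mpr; linarith
      calc Real.exp ((n:ℝ) * Real.log (μ/n) + n - μ) * Real.sqrt μ
          ≤ Real.exp (-(μ/4)) * (0.8 * Real.sqrt (2*π) * Real.exp (μ/4)) := by
            apply mul_le_mul hexpbound key hsμ.le (Real.exp_pos _).le
        _ = 0.8 * Real.sqrt (2*π) := by
            rw [show Real.exp (-(μ/4)) * (0.8 * Real.sqrt (2*π) * Real.exp (μ/4))
              = 0.8 * Real.sqrt (2*π) * (Real.exp (-(μ/4)) * Real.exp (μ/4)) by ring,
              ← Real.exp_add]
            simp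
        _ ≤ 0.8 * Real.sqrt (2*π*n) := by linarith


lemma exp_quad (x : ℝ) (hx : |x| ≤ 1) : Real.exp x ≤ 1 + x + 0.75 * x^2 := by
  have h := Real.exp_bound hx (by norm_num : 0 < 2)
  rw [Finset.sum_range_succ, Finset.sum_range_one] at h
  simp only [pow_zero, pow_one, Nat.factorial] at h
  have h2 : |x|^2 * ((2+1) / ((2:ℕ).factorial * 2)) = 0.75 * x^2 := by
    rw [sq_abs]; norm_num [Nat.factorial]; ring
  rw [abs_le] at h
  have := h.2
  push_cast at this h2 ⊢
  nlinarith [sq_abs x]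

lemma cosh_quad (u : ℝ) (h0 : 0 ≤ u) (h1 : u ≤ 1) : Real.cosh u ≤ 1 + 0.75 * u^2 := by
  rw [Real.cosh_eq]
  have ha := exp_quad u (by rw [abs_of_nonneg h0]; exact h1)
  have hb := exp_quad (-u) (by rw [abs_neg, abs_of_nonneg h0]; exact h1)
  have : (-u)^2 = u^2 := by ring
  rw [this] at hb
  linarith

lemma exponent_choice (r : ℝ) (hr : 0 < r) (m : ℕ) (hm : (m:ℝ) ≤ 63 * r) :
    ∃ u : ℝ, 0 ≤ u ∧ r * (Real.cosh u - 1) - u * m ≤ -(m:ℝ)^2 / (252 * r) := by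
  rcases le_or_gt (m:ℝ) r with hcase | hcase
  · refine ⟨(m:ℝ)/(2*r), by positivity, ?_⟩
    have hu1 : (m:ℝ)/(2*r) ≤ 1 := by
      rw [div_le_one (by positivity)]; linarith
    have hc := cosh_quad ((m:ℝ)/(2*r)) (by positivity) hu1
    have hq : (m:ℝ)/(2*r) * m = (m:ℝ)^2/(2*r) := by field_simp
    have h2 : r * (Real.cosh ((m:ℝ)/(2*r)) - 1) ≤ 0.75 * ((m:ℝ)^2/(4*r)) := by
      have : r * (((m:ℝ)/(2*r))^2) = (m:ℝ)^2/(4*r) := by field_simp; ring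
      nlinarith
    have h3 : (0:ℝ) ≤ (m:ℝ)^2/r := by positivity
    have e1 : (0.75:ℝ) * ((m:ℝ)^2/(4*r)) - (m:ℝ)^2/(2*r) = -(5/16) * ((m:ℝ)^2/r) := by ring
    have e2 : -(m:ℝ)^2/(252*r) = -(1/252) * ((m:ℝ)^2/r) := by ring
    rw [hq]
    rw [e2]
    nlinarith
  · refine ⟨1/2, by norm_num, ?_⟩
    have hc := cosh_quad (1/2) (by norm_num) (by norm_num)
    have h2 : r * (Real.cosh (1/2:ℝ) - 1) ≤ (3/16) * r := by nlinarith
    have h3 : (m:ℝ)^2/(252*r) ≤ (5/16)*m := by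
      rw [div_le_iff₀ (by positivity)]
      nlinarith
    rw [show -(m:ℝ)^2/(252*r) = -((m:ℝ)^2/(252*r)) by ring]
    nlinarith


lemma bessel_summable (r : ℝ) (hr : 0 ≤ r) (m : ℕ) :
    Summable (fun k : ℕ => (1 / ((k.factorial : ℝ) * ((k + m).factorial : ℝ))) * (r/2)^(2*k+m)) := by
  have hle : ∀ k : ℕ, (1 / ((k.factorial : ℝ) * ((k + m).factorial : ℝ))) * (r/2)^(2*k+m)
      ≤ (r/2)^m * ((r^2/4)^k / k.factorial) := by
    intro k
    have hf1 : (1:ℝ) ≤ ((k+m).factorial : ℝ) := by exact_mod_cast (k+m).factorial_pos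
    have hfk : (0:ℝ) < (k.factorial : ℝ) := by exact_mod_cast k.factorial_pos
    have hpow : (r/2)^(2*k+m) = (r^2/4)^k * (r/2)^m := by
      rw [pow_add, pow_mul]
      congr 2
      ring
    have hdiv : (1:ℝ) / ((k.factorial : ℝ) * ((k + m).factorial : ℝ)) ≤ 1 / (k.factorial : ℝ) := by
      apply div_le_div_of_nonneg_left (by norm_num) hfk
      nlinarith
    calc (1 / ((k.factorial : ℝ) * ((k + m).factorial : ℝ))) * (r/2)^(2*k+m)
        ≤ (1 / (k.factorial : ℝ)) * (r/2)^(2*k+m) := by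
          apply mul_le_mul_of_nonneg_right hdiv (by positivity)
      _ = (r/2)^m * ((r^2/4)^k / k.factorial) := by rw [hpow]; ring
  exact Summable.of_nonneg_of_le (fun k => by positivity) hle
    ((Real.summable_pow_div_factorial (r^2/4)).mul_left _)

lemma bessel_bound (r : ℝ) (hr : 0 < r) (m : ℕ) (hm : (m:ℝ) ≤ 63 * r) :
    Real.exp (-r) * (∑' k : ℕ, (1 / ((k.factorial : ℝ) * ((k + m).factorial : ℝ))) * (r/2)^(2*k+m))
      ≤ Real.sqrt (π/(2*r)) * Real.exp (-(m:ℝ)^2 / (252 * r)) := by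
  obtain ⟨u, hu0, hE⟩ := exponent_choice r hr m hm
  set μ₁ : ℝ := r/2 * Real.exp u with hμ₁
  set μ₂ : ℝ := r/2 * Real.exp (-u) with hμ₂
  have hμ₁pos : 0 < μ₁ := by positivity
  have hμ₂pos : 0 < μ₂ := by positivity
  have hμ₁ge : r/2 ≤ μ₁ := by
    have : (1:ℝ) ≤ Real.exp u := Real.one_le_exp hu0
    nlinarith
  have hmin : min 1 (0.8 / Real.sqrt μ₁) ≤ Real.sqrt (π/(2*r)) := by
    rcases le_or_gt r (π/2) with hrs | hrs
    · refine le_trans (min_le_left _ _) ?_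
      rw [show (1:ℝ) = Real.sqrt 1 by simp]
      apply Real.sqrt_le_sqrt
      rw [le_div_iff₀ (by positivity)]
      linarith
    · refine le_trans (min_le_right _ _) ?_
      have h1 : 0.8 / Real.sqrt μ₁ ≤ 0.8 / Real.sqrt (r/2) := by
        apply div_le_div_of_nonneg_left (by norm_num) (Real.sqrt_pos.mpr (by positivity))
        exact Real.sqrt_le_sqrt hμ₁ge
      refine h1.trans ?_
      rw [div_le_iff₀ (Real.sqrt_pos.mpr (by positivity))]
      rw [← Real.sqrt_mul (by positivity)]
      rw [show π/(2*r) * (r/2) = π/4 by field_simp; ring]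
      calc (0.8:ℝ) = Real.sqrt 0.64 := by
            rw [show (0.64:ℝ) = 0.8^2 by norm_num, Real.sqrt_sq (by norm_num)]
        _ ≤ Real.sqrt (π/4) := by
            apply Real.sqrt_le_sqrt
            linarith [Real.pi_gt_d6]
  set C : ℝ := Real.sqrt (π/(2*r)) * Real.exp (-(m:ℝ)^2 / (252 * r)) with hC
  have hCpos : 0 < C := by rw [hC]; positivity
  have hterm : ∀ k : ℕ,
      Real.exp (-r) * ((1 / ((k.factorial : ℝ) * ((k + m).factorial : ℝ))) * (r/2)^(2*k+m))
        ≤ (C * Real.exp (-μ₂)) * (μ₂^k / k.factorial) := by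
    intro k
    have hprod : Real.exp (-u)^k * Real.exp u^(k+m) = Real.exp (u*m) := by
      rw [← Real.exp_nat_mul, ← Real.exp_nat_mul, ← Real.exp_add]
      congr 1
      push_cast
      ring
    have h2 : μ₂^k * μ₁^(k+m) = (r/2)^(2*k+m) * Real.exp (u*(m:ℝ)) := by
      rw [hμ₁, hμ₂, mul_pow, mul_pow, show 2*k+m = k+(k+m) by ring, pow_add, ← hprod]
      ring
    have hsum : μ₁ + μ₂ = r * Real.cosh u := by rw [hμ₁, hμ₂, Real.cosh_eq]; ring
    have h3 : Real.exp (r*(Real.cosh u - 1) - u*(m:ℝ)) * Real.exp (-μ₂) * Real.exp (-μ₁)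
        * Real.exp (u*(m:ℝ)) = Real.exp (-r) := by
      rw [← Real.exp_add, ← Real.exp_add, ← Real.exp_add]
      congr 1
      linarith
    have hkey : Real.exp (-r) * ((1 / ((k.factorial : ℝ) * ((k + m).factorial : ℝ))) * (r/2)^(2*k+m))
        = Real.exp (r * (Real.cosh u - 1) - u * (m:ℝ))
          * ((Real.exp (-μ₂) * μ₂^k / k.factorial)
             * (Real.exp (-μ₁) * μ₁^(k+m) / (k+m).factorial)) := by
      rw [show Real.exp (r * (Real.cosh u - 1) - u * (m:ℝ))
          * ((Real.exp (-μ₂) * μ₂^k / k.factorial)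
             * (Real.exp (-μ₁) * μ₁^(k+m) / (k+m).factorial))
        = Real.exp (r*(Real.cosh u - 1) - u*(m:ℝ)) * Real.exp (-μ₂) * Real.exp (-μ₁)
          * (μ₂^k * μ₁^(k+m)) * (1 / ((k.factorial : ℝ) * ((k+m).factorial : ℝ))) by ring]
      rw [h2, show Real.exp (r*(Real.cosh u - 1) - u*(m:ℝ)) * Real.exp (-μ₂) * Real.exp (-μ₁)
          * ((r/2)^(2*k+m) * Real.exp (u*(m:ℝ)))
          * (1 / ((k.factorial : ℝ) * ((k+m).factorial : ℝ)))
        = (Real.exp (r*(Real.cosh u - 1) - u*(m:ℝ)) * Real.exp (-μ₂) * Real.exp (-μ₁)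
            * Real.exp (u*(m:ℝ))) * ((1 / ((k.factorial : ℝ) * ((k+m).factorial : ℝ))) * (r/2)^(2*k+m)) by ring]
      rw [h3]
    rw [hkey]
    have hpois : Real.exp (-μ₁) * μ₁^(k+m) / (k+m).factorial ≤ Real.sqrt (π/(2*r)) :=
      le_trans (poisson_le μ₁ hμ₁pos (k+m)) hmin
    have hexpE : Real.exp (r * (Real.cosh u - 1) - u * (m:ℝ)) ≤ Real.exp (-(m:ℝ)^2 / (252*r)) :=
      Real.exp_le_exp.mpr hE
    have hP2 : (0:ℝ) ≤ Real.exp (-μ₂) * μ₂^k / k.factorial := by positivity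
    calc Real.exp (r * (Real.cosh u - 1) - u * (m:ℝ))
          * ((Real.exp (-μ₂) * μ₂^k / k.factorial) * (Real.exp (-μ₁) * μ₁^(k+m) / (k+m).factorial))
        = (Real.exp (r * (Real.cosh u - 1) - u * (m:ℝ)) * (Real.exp (-μ₁) * μ₁^(k+m) / (k+m).factorial))
          * (Real.exp (-μ₂) * μ₂^k / k.factorial) := by ring
      _ ≤ (Real.exp (-(m:ℝ)^2 / (252*r)) * Real.sqrt (π/(2*r)))
          * (Real.exp (-μ₂) * μ₂^k / k.factorial) := by
          apply mul_le_mul_of_nonneg_right _ hP2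
          exact mul_le_mul hexpE hpois (by positivity) (Real.exp_pos _).le
      _ = (C * Real.exp (-μ₂)) * (μ₂^k / k.factorial) := by rw [hC]; ring
  have hsum1 : Summable (fun k : ℕ =>
      Real.exp (-r) * ((1 / ((k.factorial : ℝ) * ((k + m).factorial : ℝ))) * (r/2)^(2*k+m))) :=
    (bessel_summable r hr.le m).mul_left _
  have hsum2 : Summable (fun k : ℕ => (C * Real.exp (-μ₂)) * (μ₂^k / k.factorial)) :=
    (Real.summable_pow_div_factorial μ₂).mul_left _
  calc Real.exp (-r) * (∑' k : ℕ, (1 / ((k.factorial : ℝ) * ((k + m).factorial : ℝ))) * (r/2)^(2*k+m))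
      = ∑' k : ℕ, Real.exp (-r) * ((1 / ((k.factorial : ℝ) * ((k + m).factorial : ℝ))) * (r/2)^(2*k+m)) := by
        rw [tsum_mul_left]
    _ ≤ ∑' k : ℕ, (C * Real.exp (-μ₂)) * (μ₂^k / k.factorial) := Summable.tsum_le_tsum hterm hsum1 hsum2
    _ = (C * Real.exp (-μ₂)) * Real.exp μ₂ := by rw [tsum_mul_left, ← exp_tsum]
    _ = C := by rw [mul_assoc, ← Real.exp_add]; simp

lemma besselI_nonneg (n : ℤ) (r : ℝ) (hr : 0 ≤ r) : 0 ≤ besselI n r := by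
  apply tsum_nonneg
  intro k
  positivity


theorem stmt8 (d : ℕ) (hd : 1 ≤ d) (Δx : ℝ) (hΔx : 0 < Δx)
    (c : Fin d → ℝ) (hc : ∀ j, 0 < c j)
    (cmin : ℝ) (hcmin : IsLeast (Set.range c) cmin)
    (α : Fin d → ℤ) (t : ℝ) (ht : 0 < t)
    -- `t ≥ 2 max_j |α^j| Δx² / (C₀ min_j c^j)` with `C₀ = 252`
    (htlarge : ∀ j, 2 * |(α j : ℝ)| * Δx ^ 2 / (252 * cmin) ≤ t) :
    |heatKernel d Δx c α t|
      ≤ Real.pi ^ ((d : ℝ) / 2) *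
        ∏ j : Fin d,
          (Real.sqrt (4 * c j * t))⁻¹
            * Real.exp (-((α j : ℝ) * Δx) ^ 2 / (2 * 252 * c j * t)) := by
  have hΔ2 : (0:ℝ) < Δx^2 := by positivity
  have hcmin_pos : 0 < cmin := by
    obtain ⟨⟨j₀, hj₀⟩, -⟩ := hcmin
    rw [← hj₀]; exact hc j₀
  have hcmin_le : ∀ j, cmin ≤ c j := fun j => hcmin.2 ⟨j, rfl⟩
  have hrpos : ∀ j : Fin d, 0 < 2 * c j * t / Δx ^ 2 := fun j => by
    have := hc j; positivity
  -- per-coordinate bound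
  have hj : ∀ j : Fin d,
      Real.exp (-(2 * c j * t / Δx ^ 2)) * besselI (α j) (2 * c j * t / Δx ^ 2) * Δx⁻¹
        ≤ Real.sqrt π * ((Real.sqrt (4 * c j * t))⁻¹
            * Real.exp (-((α j : ℝ) * Δx) ^ 2 / (2 * 252 * c j * t))) := by
    intro j
    set r : ℝ := 2 * c j * t / Δx ^ 2 with hrdef
    have hr : 0 < r := hrpos j
    set m : ℕ := (α j).natAbs with hmdef
    have hcast : (m:ℝ) = |(α j : ℝ)| := by
      rw [hmdef, Nat.cast_natAbs, Int.cast_abs]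
    have hm : (m:ℝ) ≤ 63 * r := by
      have h1 := htlarge j
      rw [div_le_iff₀ (by positivity)] at h1
      rw [hcast, hrdef]
      rw [show (63:ℝ) * (2 * c j * t / Δx ^ 2) = 126 * c j * t / Δx^2 by ring, le_div_iff₀ hΔ2]
      have h2 : cmin ≤ c j := hcmin_le j
      nlinarith [abs_nonneg ((α j : ℝ))]
    have hb := bessel_bound r hr m hm
    have hb2 : Real.exp (-r) * besselI (α j) r ≤
        Real.sqrt (π/(2*r)) * Real.exp (-(m:ℝ)^2 / (252 * r)) := hb
    have heq1 : Real.sqrt (π/(2*r)) * Δx⁻¹ = Real.sqrt π * (Real.sqrt (4 * c j * t))⁻¹ := by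
      have hc' := hc j
      have h4 : (0:ℝ) < 4 * c j * t := by positivity
      have hπr : π/(2*r) = π * Δx^2 / (4 * c j * t) := by
        rw [hrdef]; field_simp; ring
      rw [hπr, show π * Δx^2 / (4 * c j * t) = (π * Δx^2) / (4 * c j * t) from rfl,
        Real.sqrt_div (by positivity), Real.sqrt_mul pi_pos.le, Real.sqrt_sq hΔx.le]
      field_simp [Real.sqrt_ne_zero'.mpr h4]
    have heq2 : -(m:ℝ)^2 / (252 * r) = -((α j : ℝ) * Δx) ^ 2 / (2 * 252 * c j * t) := by
      have hc' := (hc j).ne'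
      have hsq : (m:ℝ)^2 = ((α j : ℝ))^2 := by rw [hcast, sq_abs]
      rw [hsq, hrdef]
      field_simp
    calc Real.exp (-r) * besselI (α j) r * Δx⁻¹
        ≤ (Real.sqrt (π/(2*r)) * Real.exp (-(m:ℝ)^2 / (252 * r))) * Δx⁻¹ := by
          apply mul_le_mul_of_nonneg_right hb2 (by positivity)
      _ = (Real.sqrt (π/(2*r)) * Δx⁻¹) * Real.exp (-(m:ℝ)^2 / (252 * r)) := by ring
      _ = Real.sqrt π * ((Real.sqrt (4 * c j * t))⁻¹
            * Real.exp (-((α j : ℝ) * Δx) ^ 2 / (2 * 252 * c j * t))) := by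
          rw [heq1, heq2]; ring
  -- nonnegativity
  have hfnn : ∀ j : Fin d, 0 ≤ Real.exp (-(2 * c j * t / Δx ^ 2)) * besselI (α j) (2 * c j * t / Δx ^ 2) :=
    fun j => mul_nonneg (Real.exp_pos _).le (besselI_nonneg _ _ (hrpos j).le)
  have hK_nonneg : 0 ≤ heatKernel d Δx c α t := by
    rw [heatKernel]
    exact mul_nonneg (by positivity) (Finset.prod_nonneg fun j _ => hfnn j)
  rw [abs_of_nonneg hK_nonneg]
  -- rewrite both sides as products
  have hLHS : heatKernel d Δx c α t = ∏ j : Fin d,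
      (Real.exp (-(2 * c j * t / Δx ^ 2)) * besselI (α j) (2 * c j * t / Δx ^ 2) * Δx⁻¹) := by
    rw [heatKernel]
    conv_rhs => rw [Finset.prod_mul_distrib]
    rw [Finset.prod_const, Finset.card_univ, Fintype.card_fin, inv_pow]
    ring
  have hRHS : Real.pi ^ ((d : ℝ) / 2) *
      ∏ j : Fin d, (Real.sqrt (4 * c j * t))⁻¹
          * Real.exp (-((α j : ℝ) * Δx) ^ 2 / (2 * 252 * c j * t))
      = ∏ j : Fin d, (Real.sqrt π * ((Real.sqrt (4 * c j * t))⁻¹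
          * Real.exp (-((α j : ℝ) * Δx) ^ 2 / (2 * 252 * c j * t)))) := by
    conv_rhs => rw [Finset.prod_mul_distrib]
    rw [Finset.prod_const, Finset.card_univ, Fintype.card_fin]
    congr 1
    rw [Real.sqrt_eq_rpow, ← Real.rpow_natCast (π ^ ((1:ℝ)/2)) d, ← Real.rpow_mul pi_pos.le]
    congr 1
    ring
  rw [hLHS, hRHS]
  exact Finset.prod_le_prod (fun j _ => mul_nonneg (hfnn j) (by positivity)) (fun j _ => hj j)
end

section
/- Let Δx > 0, δ > 0, α, β ∈ ℤ, set x_α := αΔx, x_β := βΔx, fix 0 < s < t with s ≥ δ and t − s ≥ δ, and define g(z) := L̃(t−s, x_α − z) · L̃(s, x_β − z) for z ∈ ℝ, where L̃(τ,z) := τ^{−1/2}(1 + z²/τ)^{−1}. Then Σ_{η ∈ ℤ} g(x_η) Δx ≤ (e^8 + (1 + Δx²/δ)²) · I(x_α, x_β, s, t), where I(x,y,s,t) := ∫_ℝ L̃(t−s, x−z) L̃(s, z−y) dz. -/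
/-- The (unnormalized) Cauchy–Lorentz kernel with scale `√t`:
`L̃(t,z) = t^{-1/2} (1 + z²/t)⁻¹`. -/
noncomputable def Ltilde (t z : ℝ) : ℝ := (Real.sqrt t)⁻¹ * (1 + z ^ 2 / t)⁻¹

open MeasureTheory Set

lemma Ltilde_pos {t : ℝ} (ht : 0 < t) (z : ℝ) : 0 < Ltilde t z := by
  unfold Ltilde
  have h1 : 0 < 1 + z ^ 2 / t := by positivity
  positivity

lemma Ltilde_sq_eq {t a b : ℝ} (h : a ^ 2 = b ^ 2) : Ltilde t a = Ltilde t b := by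
  unfold Ltilde; rw [h]

lemma Ltilde_comp {δ τ a b h : ℝ} (hδ : 0 < δ) (hτ : δ ≤ τ) (hh : 0 ≤ h)
    (hab : |a - b| ≤ h) :
    Ltilde τ a ≤ (2 + 2 * h ^ 2 / δ) * Ltilde τ b := by
  have hτ0 : 0 < τ := hδ.trans_le hτ
  have hA : 0 < 1 + a ^ 2 / τ := by positivity
  have hB : 0 < 1 + b ^ 2 / τ := by positivity
  have hK : 0 < 2 + 2 * h ^ 2 / δ := by positivity
  have hab2 : (a - b) ^ 2 ≤ h ^ 2 := by
    nlinarith [abs_nonneg (a - b), sq_abs (a - b)]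
  have e0 : b ^ 2 ≤ 2 * a ^ 2 + 2 * h ^ 2 := by nlinarith [sq_nonneg (b - 2 * a)]
  have hτne : τ ≠ 0 := hτ0.ne'
  have hδne : δ ≠ 0 := hδ.ne'
  have key' : δ * (τ + b ^ 2) ≤ (2 * δ + 2 * h ^ 2) * (τ + a ^ 2) := by
    nlinarith [mul_le_mul_of_nonneg_left e0 hδ.le,
      mul_le_mul_of_nonneg_right hτ (sq_nonneg h),
      mul_pos hδ hτ0, mul_nonneg (sq_nonneg h) (sq_nonneg a)]
  have key : 1 + b ^ 2 / τ ≤ (2 + 2 * h ^ 2 / δ) * (1 + a ^ 2 / τ) := by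
    have hrw1 : 1 + b ^ 2 / τ = (τ + b ^ 2) / τ := by field_simp
    have hrw2 : (2 + 2 * h ^ 2 / δ) * (1 + a ^ 2 / τ)
        = (2 * δ + 2 * h ^ 2) * (τ + a ^ 2) / (δ * τ) := by field_simp
    rw [hrw1, hrw2, div_le_div_iff₀ hτ0 (by positivity)]
    nlinarith [mul_le_mul_of_nonneg_right key' hτ0.le]
  have hinv : (1 + a ^ 2 / τ)⁻¹ ≤ (2 + 2 * h ^ 2 / δ) * (1 + b ^ 2 / τ)⁻¹ := by
    rw [inv_eq_one_div, inv_eq_one_div, ← mul_div_assoc, mul_one, div_le_div_iff₀ hA hB]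
    linarith
  unfold Ltilde
  have hs : (0:ℝ) ≤ (Real.sqrt τ)⁻¹ := by positivity
  calc (Real.sqrt τ)⁻¹ * (1 + a ^ 2 / τ)⁻¹
      ≤ (Real.sqrt τ)⁻¹ * ((2 + 2 * h ^ 2 / δ) * (1 + b ^ 2 / τ)⁻¹) := by
        exact mul_le_mul_of_nonneg_left hinv hs
    _ = (2 + 2 * h ^ 2 / δ) * ((Real.sqrt τ)⁻¹ * (1 + b ^ 2 / τ)⁻¹) := by ring

theorem stmt17 (Δx : ℝ) (hΔx : 0 < Δx) (δ : ℝ) (hδ : 0 < δ) (α β : ℤ)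
    (s t : ℝ) (hs : 0 < s) (hst : s < t) (hsδ : δ ≤ s) (htsδ : δ ≤ t - s) :
    (∑' η : ℤ,
        Ltilde (t - s) ((α : ℝ) * Δx - (η : ℝ) * Δx)
          * Ltilde s ((β : ℝ) * Δx - (η : ℝ) * Δx) * Δx)
      ≤ (Real.exp 8 + (1 + Δx ^ 2 / δ) ^ 2)
          * ∫ z : ℝ, Ltilde (t - s) ((α : ℝ) * Δx - z) * Ltilde s (z - (β : ℝ) * Δx) := by
  have hτ₁ : 0 < t - s := by linarith
  set A : ℝ := (α : ℝ) * Δx with hA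
  set B : ℝ := (β : ℝ) * Δx with hB
  set g : ℝ → ℝ := fun z => Ltilde (t - s) (A - z) * Ltilde s (z - B) with hg
  set f : ℤ → ℝ := fun η =>
    Ltilde (t - s) (A - (η : ℝ) * Δx) * Ltilde s (B - (η : ℝ) * Δx) * Δx with hf
  have hgpos : ∀ z, 0 < g z := fun z =>
    mul_pos (Ltilde_pos hτ₁ _) (Ltilde_pos hs _)
  have hfpos : ∀ η, 0 < f η := fun η =>
    mul_pos (mul_pos (Ltilde_pos hτ₁ _) (Ltilde_pos hs _)) hΔx
  -- continuity of g
  have hg_cont : Continuous g := by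
    rw [hg]
    unfold Ltilde
    apply Continuous.mul
    · apply Continuous.mul continuous_const
      apply Continuous.inv₀
      · fun_prop
      · intro z; positivity
    · apply Continuous.mul continuous_const
      apply Continuous.inv₀
      · fun_prop
      · intro z; positivity
  -- integrability of g
  have hsqs : Real.sqrt s ≠ 0 := (Real.sqrt_pos.mpr hs).ne'
  have hdom : Integrable (fun z : ℝ =>
      ((Real.sqrt (t - s))⁻¹ * (Real.sqrt s)⁻¹) * (1 + ((z - B) / Real.sqrt s) ^ 2)⁻¹) := by
    have h1 : Integrable (fun x : ℝ => (1 + (x / Real.sqrt s) ^ 2)⁻¹) :=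
      integrable_inv_one_add_sq.comp_div hsqs
    exact (h1.comp_sub_right B).const_mul _
  have hg_int : Integrable g := by
    apply hdom.mono' hg_cont.aestronglyMeasurable
    filter_upwards with z
    have hsq : ((z - B) / Real.sqrt s) ^ 2 = (z - B) ^ 2 / s := by
      rw [div_pow, Real.sq_sqrt hs.le]
    have h1 : (1 + (A - z) ^ 2 / (t - s))⁻¹ ≤ 1 := by
      apply inv_le_one_of_one_le₀
      have : (0:ℝ) ≤ (A - z) ^ 2 / (t - s) := by positivity
      linarith
    have h2 : (0:ℝ) < 1 + (z - B) ^ 2 / s := by positivity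
    rw [Real.norm_eq_abs, abs_of_pos (hgpos z)]
    show Ltilde (t - s) (A - z) * Ltilde s (z - B) ≤ _
    unfold Ltilde
    rw [hsq]
    have hst1 : (0:ℝ) ≤ (Real.sqrt (t - s))⁻¹ := by positivity
    have hst2 : (0:ℝ) ≤ (Real.sqrt s)⁻¹ := by positivity
    have h3 : (0:ℝ) ≤ (1 + (z - B) ^ 2 / s)⁻¹ := by positivity
    calc (Real.sqrt (t - s))⁻¹ * (1 + (A - z) ^ 2 / (t - s))⁻¹
          * ((Real.sqrt s)⁻¹ * (1 + (z - B) ^ 2 / s)⁻¹)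
        ≤ (Real.sqrt (t - s))⁻¹ * 1 * ((Real.sqrt s)⁻¹ * (1 + (z - B) ^ 2 / s)⁻¹) := by
          gcongr
      _ = (Real.sqrt (t - s))⁻¹ * (Real.sqrt s)⁻¹ * (1 + (z - B) ^ 2 / s)⁻¹ := by ring
  have hg_int_nonneg : (0:ℝ) ≤ ∫ z, g z := integral_nonneg fun z => (hgpos z).le
  -- constant
  set K : ℝ := 2 + 2 * (Δx / 2) ^ 2 / δ with hK
  have hKpos : 0 < K := by positivity
  -- intervals
  set I : ℤ → Set ℝ := fun η => Ico ((η : ℝ) * Δx - Δx / 2) ((η : ℝ) * Δx + Δx / 2) with hI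
  -- per-term estimate
  have step : ∀ η : ℤ, f η ≤ K ^ 2 * ∫ z in I η, g z := by
    intro η
    have hpt : ∀ z ∈ I η,
        Ltilde (t - s) (A - (η : ℝ) * Δx) * Ltilde s (B - (η : ℝ) * Δx) / K ^ 2 ≤ g z := by
      intro z hz
      obtain ⟨hz1, hz2⟩ := hz
      have habs : |(A - (η : ℝ) * Δx) - (A - z)| ≤ Δx / 2 := by
        rw [show (A - (η : ℝ) * Δx) - (A - z) = z - (η : ℝ) * Δx by ring]
        rw [abs_le]; constructor <;> linarith
      have habs' : |(B - (η : ℝ) * Δx) - (B - z)| ≤ Δx / 2 := by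
        rw [show (B - (η : ℝ) * Δx) - (B - z) = z - (η : ℝ) * Δx by ring]
        rw [abs_le]; constructor <;> linarith
      have h1 : Ltilde (t - s) (A - (η : ℝ) * Δx) ≤ K * Ltilde (t - s) (A - z) :=
        Ltilde_comp hδ htsδ (by linarith) habs
      have h2 : Ltilde s (B - (η : ℝ) * Δx) ≤ K * Ltilde s (B - z) :=
        Ltilde_comp hδ hsδ (by linarith) habs'
      have h2' : Ltilde s (B - z) = Ltilde s (z - B) := Ltilde_sq_eq (by ring)
      rw [h2'] at h2
      rw [div_le_iff₀ (pow_pos hKpos 2)]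
      calc Ltilde (t - s) (A - (η : ℝ) * Δx) * Ltilde s (B - (η : ℝ) * Δx)
          ≤ (K * Ltilde (t - s) (A - z)) * (K * Ltilde s (z - B)) := by
            exact mul_le_mul h1 h2 (Ltilde_pos hs _).le
              (mul_nonneg hKpos.le (Ltilde_pos hτ₁ _).le)
        _ = g z * K ^ 2 := by simp only [hg]; ring
    have hmeas : MeasurableSet (I η) := measurableSet_Ico
    have hμ : volume (I η) = ENNReal.ofReal Δx := by
      rw [hI, Real.volume_Ico]
      congr 1; ring
    have hμne : volume (I η) ≠ ⊤ := by rw [hμ]; exact ENNReal.ofReal_ne_top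
    have := setIntegral_ge_of_const_le_real hmeas hμne hpt hg_int.integrableOn
    rw [measureReal_def, hμ, ENNReal.toReal_ofReal hΔx.le] at this
    rw [hf]
    have : Ltilde (t - s) (A - (η : ℝ) * Δx) * Ltilde s (B - (η : ℝ) * Δx) / K ^ 2 * Δx
        ≤ ∫ z in I η, g z := this
    calc Ltilde (t - s) (A - (η : ℝ) * Δx) * Ltilde s (B - (η : ℝ) * Δx) * Δx
        = K ^ 2 * (Ltilde (t - s) (A - (η : ℝ) * Δx) * Ltilde s (B - (η : ℝ) * Δx) / K ^ 2 * Δx) := by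
          have hK2 : K ^ 2 ≠ 0 := (pow_pos hKpos 2).ne'
          field_simp
      _ ≤ K ^ 2 * ∫ z in I η, g z :=
          mul_le_mul_of_nonneg_left this (pow_pos hKpos 2).le
  -- finite sums
  have hfin : ∀ F : Finset ℤ, ∑ η ∈ F, f η ≤ K ^ 2 * ∫ z, g z := by
    intro F
    have hdisj : Set.Pairwise (↑F) (Function.onFun Disjoint I) := by
      intro η _ η' _ hne
      have key : ∀ a b : ℤ, a < b → (a : ℝ) * Δx + Δx / 2 ≤ (b : ℝ) * Δx - Δx / 2 := by
        intro a b hab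
        have : (a : ℝ) + 1 ≤ (b : ℝ) := by exact_mod_cast Int.add_one_le_iff.mpr hab
        nlinarith
      show Disjoint (I η) (I η')
      rw [hI]
      rw [Set.Ico_disjoint_Ico]
      rcases lt_or_gt_of_ne hne with h | h
      · exact le_trans (min_le_left _ _) (le_trans (key _ _ h) (le_max_right _ _))
      · exact le_trans (min_le_right _ _) (le_trans (key _ _ h) (le_max_left _ _))
    have hunion : ∑ η ∈ F, ∫ z in I η, g z = ∫ z in ⋃ η ∈ F, I η, g z := by
      rw [integral_biUnion_finset F (fun _ _ => measurableSet_Ico) hdisj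
        (fun _ _ => hg_int.integrableOn)]
    calc ∑ η ∈ F, f η ≤ ∑ η ∈ F, K ^ 2 * ∫ z in I η, g z := Finset.sum_le_sum fun η _ => step η
      _ = K ^ 2 * ∑ η ∈ F, ∫ z in I η, g z := by rw [Finset.mul_sum]
      _ = K ^ 2 * ∫ z in ⋃ η ∈ F, I η, g z := by rw [hunion]
      _ ≤ K ^ 2 * ∫ z, g z := by
          apply mul_le_mul_of_nonneg_left _ (pow_pos hKpos 2).le
          exact setIntegral_le_integral hg_int
            (Filter.Eventually.of_forall fun z => (hgpos z).le)
  have hsummable : Summable f := summable_of_sum_le (fun η => (hfpos η).le) hfin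
  have htsum : ∑' η, f η ≤ K ^ 2 * ∫ z, g z := Summable.tsum_le_of_sum_le hsummable hfin
  -- constant comparison
  have hconst : K ^ 2 ≤ Real.exp 8 + (1 + Δx ^ 2 / δ) ^ 2 := by
    have hexp : (9:ℝ) ≤ Real.exp 8 := by
      have := Real.add_one_le_exp (8:ℝ); linarith
    have hc : (0:ℝ) ≤ Δx ^ 2 / δ := by positivity
    have hKeq : K = 2 + (Δx ^ 2 / δ) / 2 := by rw [hK]; ring
    rw [hKeq]
    nlinarith [sq_nonneg (Δx ^ 2 / δ)]
  -- conclusion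
  exact htsum.trans (mul_le_mul_of_nonneg_right hconst hg_int_nonneg)
end
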